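/- In the CCR algebra setting, let R be a real symmetric n×n matrix, N a real m×n matrix, J a real antisymmetric m×m matrix, and Ω := I_m + iJ. Define H := (1/2)·XᵀRX, L := NX, A := 2Θ(R + NᵀJN), B := 2ΘNᵀ, and the GKSL generator acting entrywise on n×n matrices of algebra elements by 𝒢(σ) := i[H, σ] − [σ, Lᵀ]ΩL − (1/2)[LᵀΩL, σ]. Let Ξ be the n×n matrix with entries Ξⱼₖ := Xⱼ·Xₖ − iΘⱼₖ·1. Then 𝒢(Ξ) = A·Ξ + Ξ·Aᵀ + B·Bᵀ·1 entrywise. -/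

import Mathlib

open Matrix

noncomputable section

namespace CCR

variable {A : Type*} [Ring A] [Algebra ℂ A] {n : ℕ}

/-- The `n`-tuple `X` of elements of the algebra satisfies the canonical commutation
relations with CCR matrix `Θ`: `XⱼXₖ − XₖXⱼ = 2iΘⱼₖ·1`. -/
def SatisfiesCCR (X : Fin n → A) (Θ : Matrix (Fin n) (Fin n) ℝ) : Prop :=
  ∀ j k, X j * X k - X k * X j = ((2 * (Θ j k : ℂ)) * Complex.I) • (1 : A)

/-- The quadratic form `XᵀMX = Σ_{j,k} Mⱼₖ Xⱼ Xₖ`. -/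
def quad (X : Fin n → A) (M : Matrix (Fin n) (Fin n) ℝ) : A :=
  ∑ j, ∑ k, ((M j k : ℂ)) • (X j * X k)

/-- The `l`-th entry of the vector `TX`, namely `Σⱼ Tₗⱼ Xⱼ`. -/
def lin (X : Fin n → A) (T : Matrix (Fin n) (Fin n) ℝ) (l : Fin n) : A :=
  ∑ j, ((T l j : ℂ)) • X j

end CCR

open CCR

/-- The GKSL generator `𝒢(σ) = i[H,σ] − [σ,Lᵀ]ΩL − (1/2)[LᵀΩL, σ]` of an open quantum
system with Hamiltonian `H`, coupling vector `L` and Ito matrix `Ω`. -/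
noncomputable def gksl {A : Type*} [Ring A] [Algebra ℂ A] {m : ℕ}
    (H : A) (L : Fin m → A) (Ω : Matrix (Fin m) (Fin m) ℂ) (σ : A) : A :=
  Complex.I • (H * σ - σ * H)
    - ∑ j, ∑ k, Ω j k • ((σ * L j - L j * σ) * L k)
    - (1 / 2 : ℂ) • ((∑ j, ∑ k, Ω j k • (L j * L k)) * σ
        - σ * ∑ j, ∑ k, Ω j k • (L j * L k))

namespace CCRAux

variable {A : Type*} [Ring A] [Algebra ℂ A] {n : ℕ}
variable {Θ : Matrix (Fin n) (Fin n) ℝ} {X : Fin n → A}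

lemma swapX (hX : SatisfiesCCR X Θ) (a b : Fin n) :
    X a * X b = X b * X a + ((2 * (Θ a b : ℂ)) * Complex.I) • (1 : A) := by
  rw [← hX a b]; abel

lemma comm_pair (hX : SatisfiesCCR X Θ) (a b c : Fin n) :
    X a * X b * X c - X c * (X a * X b)
      = ((2 * (Θ b c : ℂ)) * Complex.I) • X a + ((2 * (Θ a c : ℂ)) * Complex.I) • X b := by
  have h1 := swapX hX b c
  have h2 := swapX hX a c
  calc X a * X b * X c - X c * (X a * X b)
      = X a * (X b * X c) - (X c * X a) * X b := by noncomm_ring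
    _ = X a * (X c * X b + ((2 * (Θ b c : ℂ)) * Complex.I) • (1 : A))
        - (X a * X c - ((2 * (Θ a c : ℂ)) * Complex.I) • (1 : A)) * X b := by
        rw [← h1]; rw [show X c * X a = X a * X c - ((2 * (Θ a c : ℂ)) * Complex.I) • (1 : A) by rw [h2]; abel]
    _ = _ := by
        simp only [mul_add, sub_mul, mul_smul_comm, smul_mul_assoc, one_mul, mul_one]
        noncomm_ring

lemma H_comm (hX : SatisfiesCCR X Θ) {R : Matrix (Fin n) (Fin n) ℝ} (hR : Rᵀ = R) (c : Fin n) :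
    ((1/2 : ℂ) • quad X R) * X c - X c * ((1/2 : ℂ) • quad X R)
      = ∑ a, (∑ b, (R a b : ℂ) * ((2 * (Θ b c : ℂ)) * Complex.I)) • X a := by
  have hRs : ∀ a b, R a b = R b a := fun a b => by
    have := congrFun (congrFun hR b) a
    rwa [Matrix.transpose_apply] at this
  have step : quad X R * X c - X c * quad X R
      = ∑ a, ∑ b, (R a b : ℂ) • (X a * X b * X c - X c * (X a * X b)) := by
    simp only [quad, Finset.sum_mul, Finset.mul_sum, smul_mul_assoc, mul_smul_comm,
      ← Finset.sum_sub_distrib, smul_sub]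
  have step2 : quad X R * X c - X c * quad X R
      = (∑ a, ∑ b, ((R a b : ℂ) * ((2 * (Θ b c : ℂ)) * Complex.I)) • X a)
        + ∑ a, ∑ b, ((R a b : ℂ) * ((2 * (Θ a c : ℂ)) * Complex.I)) • X b := by
    rw [step]
    simp only [comm_pair hX, smul_add, Finset.sum_add_distrib, smul_smul]
  have step3 : (∑ a, ∑ b, ((R a b : ℂ) * ((2 * (Θ a c : ℂ)) * Complex.I)) • X b)
      = ∑ a, ∑ b, ((R a b : ℂ) * ((2 * (Θ b c : ℂ)) * Complex.I)) • X a := by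
    rw [Finset.sum_comm]
    refine Finset.sum_congr rfl fun a _ => Finset.sum_congr rfl fun b _ => ?_
    rw [hRs b a]
  rw [smul_mul_assoc, mul_smul_comm, ← smul_sub, step2, step3, ← two_smul ℂ, smul_smul]
  norm_num
  exact Finset.sum_congr rfl fun a _ => Finset.sum_smul.symm

/-- canonical form: `∑ c1 l • X l X k + ∑ c2 l • X j X l + s•1` -/
def CF (X : Fin n → A) (j k : Fin n) (c1 c2 : Fin n → ℂ) (s : ℂ) : A :=
  (∑ l, c1 l • (X l * X k)) + (∑ l, c2 l • (X j * X l)) + s • (1 : A)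

lemma CF_smul (X : Fin n → A) (j k : Fin n) (c1 c2 : Fin n → ℂ) (s z : ℂ) :
    z • CF X j k c1 c2 s = CF X j k (fun l => z * c1 l) (fun l => z * c2 l) (z * s) := by
  simp [CF, Finset.smul_sum, smul_smul, smul_add]

lemma CF_add (X : Fin n → A) (j k : Fin n) (c1 c2 d1 d2 : Fin n → ℂ) (s t : ℂ) :
    CF X j k c1 c2 s + CF X j k d1 d2 t
      = CF X j k (fun l => c1 l + d1 l) (fun l => c2 l + d2 l) (s + t) := by
  simp [CF, Finset.sum_add_distrib, add_smul]; abel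

lemma CF_neg (X : Fin n → A) (j k : Fin n) (c1 c2 : Fin n → ℂ) (s : ℂ) :
    - CF X j k c1 c2 s = CF X j k (fun l => - c1 l) (fun l => - c2 l) (- s) := by
  simp [CF, Finset.sum_neg_distrib, neg_smul]; abel

lemma CF_sub (X : Fin n → A) (j k : Fin n) (c1 c2 d1 d2 : Fin n → ℂ) (s t : ℂ) :
    CF X j k c1 c2 s - CF X j k d1 d2 t
      = CF X j k (fun l => c1 l - d1 l) (fun l => c2 l - d2 l) (s - t) := by
  rw [sub_eq_add_neg, CF_neg, CF_add]; simp [sub_eq_add_neg]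

lemma CF_sum {ι : Type*} [Fintype ι] (X : Fin n → A) (j k : Fin n)
    (c1 c2 : ι → Fin n → ℂ) (s : ι → ℂ) :
    ∑ i, CF X j k (c1 i) (c2 i) (s i)
      = CF X j k (fun l => ∑ i, c1 i l) (fun l => ∑ i, c2 i l) (∑ i, s i) := by
  simp only [CF, Finset.sum_add_distrib, Finset.sum_smul]
  rw [Finset.sum_comm (f := fun i l => c1 i l • (X l * X k)),
    Finset.sum_comm (f := fun i l => c2 i l • (X j * X l))]

lemma CF_congr (X : Fin n → A) (j k : Fin n) {c1 c2 d1 d2 : Fin n → ℂ} {s t : ℂ}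
    (h1 : ∀ l, c1 l = d1 l) (h2 : ∀ l, c2 l = d2 l) (h3 : s = t) :
    CF X j k c1 c2 s = CF X j k d1 d2 t := by
  simp only [CF, h3]
  congr 2
  · exact Finset.sum_congr rfl fun l _ => by rw [h1]
  · exact Finset.sum_congr rfl fun l _ => by rw [h2]

lemma piece_ham (hX : SatisfiesCCR X Θ) {R : Matrix (Fin n) (Fin n) ℝ} (hR : Rᵀ = R)
    (j k : Fin n) :
    Complex.I • (((1/2 : ℂ) • quad X R) * (X j * X k) - (X j * X k) * ((1/2 : ℂ) • quad X R))
      = CF X j k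
          (fun a => Complex.I * ∑ b, (R a b : ℂ) * ((2 * (Θ b j : ℂ)) * Complex.I))
          (fun a => Complex.I * ∑ b, (R a b : ℂ) * ((2 * (Θ b k : ℂ)) * Complex.I))
          0 := by
  have lb : ((1/2 : ℂ) • quad X R) * (X j * X k) - (X j * X k) * ((1/2 : ℂ) • quad X R)
      = (((1/2 : ℂ) • quad X R) * X j - X j * ((1/2 : ℂ) • quad X R)) * X k
        + X j * (((1/2 : ℂ) • quad X R) * X k - X k * ((1/2 : ℂ) • quad X R)) := by
    noncomm_ring
  rw [lb, H_comm hX hR j, H_comm hX hR k, Finset.sum_mul, Finset.mul_sum]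
  simp only [smul_mul_assoc, mul_smul_comm, smul_add, Finset.smul_sum, smul_smul, CF,
    zero_smul, add_zero]

lemma y_lin_comm (hX : SatisfiesCCR X Θ) (j k : Fin n) (u : Fin n → ℝ) :
    (X j * X k) * (∑ b, ((u b : ℂ)) • X b) - (∑ b, ((u b : ℂ)) • X b) * (X j * X k)
      = ∑ b, (u b : ℂ) • (((2 * (Θ k b : ℂ)) * Complex.I) • X j
          + ((2 * (Θ j b : ℂ)) * Complex.I) • X k) := by
  rw [Finset.mul_sum, Finset.sum_mul, ← Finset.sum_sub_distrib]
  refine Finset.sum_congr rfl fun b _ => ?_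
  rw [mul_smul_comm, smul_mul_assoc, ← smul_sub, comm_pair hX j k b]

lemma G_mul_L (hX : SatisfiesCCR X Θ) (j k : Fin n) (u v : Fin n → ℝ) :
    ((X j * X k) * (∑ b, ((u b : ℂ)) • X b) - (∑ b, ((u b : ℂ)) • X b) * (X j * X k))
        * (∑ a, ((v a : ℂ)) • X a)
      = CF X j k
          (fun a => ∑ b, ((u b : ℂ) * (v a : ℂ)) * ((2 * (Θ j b : ℂ)) * Complex.I))
          (fun a => ∑ b, ((u b : ℂ) * (v a : ℂ)) * ((2 * (Θ k b : ℂ)) * Complex.I))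
          (∑ b, ∑ a, ((u b : ℂ) * (v a : ℂ))
            * (((2 * (Θ j b : ℂ)) * Complex.I) * ((2 * (Θ k a : ℂ)) * Complex.I))) := by
  rw [y_lin_comm hX j k u, Finset.sum_mul]
  have perb : ∀ b, ((u b : ℂ) • (((2 * (Θ k b : ℂ)) * Complex.I) • X j
          + ((2 * (Θ j b : ℂ)) * Complex.I) • X k)) * (∑ a, ((v a : ℂ)) • X a)
      = CF X j k
          (fun a => ((u b : ℂ) * (v a : ℂ)) * ((2 * (Θ j b : ℂ)) * Complex.I))
          (fun a => ((u b : ℂ) * (v a : ℂ)) * ((2 * (Θ k b : ℂ)) * Complex.I))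
          (∑ a, ((u b : ℂ) * (v a : ℂ))
            * (((2 * (Θ j b : ℂ)) * Complex.I) * ((2 * (Θ k a : ℂ)) * Complex.I))) := by
    intro b
    rw [smul_mul_assoc, Finset.mul_sum, Finset.smul_sum]
    have pera : ∀ a, (u b : ℂ) • ((((2 * (Θ k b : ℂ)) * Complex.I) • X j
            + ((2 * (Θ j b : ℂ)) * Complex.I) • X k) * ((v a : ℂ) • X a))
        = (((u b : ℂ) * (v a : ℂ)) * ((2 * (Θ j b : ℂ)) * Complex.I)) • (X a * X k)
          + (((u b : ℂ) * (v a : ℂ)) * ((2 * (Θ k b : ℂ)) * Complex.I)) • (X j * X a)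
          + (((u b : ℂ) * (v a : ℂ))
            * (((2 * (Θ j b : ℂ)) * Complex.I) * ((2 * (Θ k a : ℂ)) * Complex.I))) • (1 : A) := by
      intro a
      rw [add_mul, smul_mul_assoc, smul_mul_assoc, mul_smul_comm, mul_smul_comm,
        swapX hX k a]
      simp only [smul_add, smul_smul]
      ring_nf
      module
    simp only [pera]
    simp only [Finset.sum_add_distrib, ← Finset.sum_smul, CF]
  rw [Finset.sum_congr rfl fun b _ => perb b, CF_sum]

lemma L_mul_G (hX : SatisfiesCCR X Θ) (j k : Fin n) (u v : Fin n → ℝ) :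
    (∑ a, ((u a : ℂ)) • X a)
        * ((X j * X k) * (∑ b, ((v b : ℂ)) • X b) - (∑ b, ((v b : ℂ)) • X b) * (X j * X k))
      = CF X j k
          (fun a => ∑ b, ((u a : ℂ) * (v b : ℂ)) * ((2 * (Θ j b : ℂ)) * Complex.I))
          (fun a => ∑ b, ((u a : ℂ) * (v b : ℂ)) * ((2 * (Θ k b : ℂ)) * Complex.I))
          (∑ b, ∑ a, ((u a : ℂ) * (v b : ℂ))
            * (((2 * (Θ k b : ℂ)) * Complex.I) * ((2 * (Θ a j : ℂ)) * Complex.I))) := by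
  rw [y_lin_comm hX j k v, Finset.mul_sum]
  have perb : ∀ b, (∑ a, ((u a : ℂ)) • X a) * ((v b : ℂ) • (((2 * (Θ k b : ℂ)) * Complex.I) • X j
          + ((2 * (Θ j b : ℂ)) * Complex.I) • X k))
      = CF X j k
          (fun a => ((u a : ℂ) * (v b : ℂ)) * ((2 * (Θ j b : ℂ)) * Complex.I))
          (fun a => ((u a : ℂ) * (v b : ℂ)) * ((2 * (Θ k b : ℂ)) * Complex.I))
          (∑ a, ((u a : ℂ) * (v b : ℂ))
            * (((2 * (Θ k b : ℂ)) * Complex.I) * ((2 * (Θ a j : ℂ)) * Complex.I))) := by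
    intro b
    rw [mul_smul_comm, Finset.sum_mul, Finset.smul_sum]
    have pera : ∀ a, (v b : ℂ) • (((u a : ℂ) • X a) * (((2 * (Θ k b : ℂ)) * Complex.I) • X j
            + ((2 * (Θ j b : ℂ)) * Complex.I) • X k))
        = (((u a : ℂ) * (v b : ℂ)) * ((2 * (Θ j b : ℂ)) * Complex.I)) • (X a * X k)
          + (((u a : ℂ) * (v b : ℂ)) * ((2 * (Θ k b : ℂ)) * Complex.I)) • (X j * X a)
          + (((u a : ℂ) * (v b : ℂ))
            * (((2 * (Θ k b : ℂ)) * Complex.I) * ((2 * (Θ a j : ℂ)) * Complex.I))) • (1 : A) := by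
      intro a
      rw [mul_add, smul_mul_assoc, smul_mul_assoc, mul_smul_comm, mul_smul_comm,
        swapX hX a j]
      simp only [smul_add, smul_smul]
      ring_nf
      module
    simp only [pera]
    simp only [Finset.sum_add_distrib, ← Finset.sum_smul, CF]
  rw [Finset.sum_congr rfl fun b _ => perb b, CF_sum]

lemma scal1 {n m : ℕ} (Θ : Matrix (Fin n) (Fin n) ℝ) (hΘ : Θᵀ = -Θ)
    (R : Matrix (Fin n) (Fin n) ℝ) (hR : Rᵀ = R)
    (N : Matrix (Fin m) (Fin n) ℝ)
    (J : Matrix (Fin m) (Fin m) ℝ) (hJ : Jᵀ = -J) (p l : Fin n) :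
    Complex.I * ∑ b, (R l b : ℂ) * (2 * (Θ b p : ℂ) * Complex.I) -
      ∑ i, ∑ i_1, ((1 : Matrix (Fin m) (Fin m) ℂ) + Complex.I • J.map (algebraMap ℝ ℂ)) i i_1
        * ∑ b, (N i b : ℂ) * (N i_1 l : ℂ) * (2 * (Θ p b : ℂ) * Complex.I) -
      1 / 2 * ∑ i, ∑ i_1,
        ((1 : Matrix (Fin m) (Fin m) ℂ) + Complex.I • J.map (algebraMap ℝ ℂ)) i i_1 *
          (-∑ b, (N i l : ℂ) * (N i_1 b : ℂ) * (2 * (Θ p b : ℂ) * Complex.I) -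
            ∑ b, (N i b : ℂ) * (N i_1 l : ℂ) * (2 * (Θ p b : ℂ) * Complex.I)) =
    ((((2:ℝ) • (Θ * (R + Nᵀ * J * N))) p l : ℝ) : ℂ) := by
  have hΘ' : ∀ a b, (Θ a b : ℂ) = -(Θ b a : ℂ) := fun a b => by
    have := congrFun (congrFun hΘ b) a
    rw [Matrix.transpose_apply, Matrix.neg_apply] at this
    exact_mod_cast this
  have hJ' : ∀ a b, (J a b : ℂ) = -(J b a : ℂ) := fun a b => by
    have := congrFun (congrFun hJ b) a
    rw [Matrix.transpose_apply, Matrix.neg_apply] at this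
    exact_mod_cast this
  have hR' : ∀ a b, (R a b : ℂ) = (R b a : ℂ) := fun a b => by
    have := congrFun (congrFun hR b) a
    rw [Matrix.transpose_apply] at this
    exact_mod_cast this
  have hOm : ∀ f : Fin m → Fin m → ℂ,
      ∑ i, ∑ i_1, ((1 : Matrix (Fin m) (Fin m) ℂ) + Complex.I • J.map (algebraMap ℝ ℂ)) i i_1 * f i i_1
        = (∑ i, f i i) + Complex.I * ∑ i, ∑ i_1, (J i i_1 : ℂ) * f i i_1 := by
    intro f
    simp only [Matrix.add_apply, Matrix.one_apply, Matrix.smul_apply, Matrix.map_apply,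
      smul_eq_mul, add_mul, ite_mul, one_mul, zero_mul, Finset.sum_add_distrib]
    congr 1
    · exact Finset.sum_congr rfl fun i _ => by rw [Finset.sum_ite_eq]; simp
    · rw [Finset.mul_sum]
      refine Finset.sum_congr rfl fun i _ => ?_
      rw [Finset.mul_sum]
      refine Finset.sum_congr rfl fun i_1 _ => ?_
      rw [Complex.coe_algebraMap]
      ring
  rw [hOm, hOm]
  -- names
  have e0 : ∑ i : Fin m, (-∑ b, (N i l : ℂ) * (N i b : ℂ) * (2 * (Θ p b : ℂ) * Complex.I) -
        ∑ b, (N i b : ℂ) * (N i l : ℂ) * (2 * (Θ p b : ℂ) * Complex.I))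
      = (-2 : ℂ) * ∑ i : Fin m, ∑ b, (N i b : ℂ) * (N i l : ℂ) * (2 * (Θ p b : ℂ) * Complex.I) := by
    rw [Finset.mul_sum]
    refine Finset.sum_congr rfl fun i _ => ?_
    rw [show ∑ b, (N i l : ℂ) * (N i b : ℂ) * (2 * (Θ p b : ℂ) * Complex.I)
        = ∑ b, (N i b : ℂ) * (N i l : ℂ) * (2 * (Θ p b : ℂ) * Complex.I) from
      Finset.sum_congr rfl fun b _ => by ring]
    ring
  have e1 : ∑ i : Fin m, ∑ i_1 : Fin m, (J i i_1 : ℂ)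
        * ∑ b, (N i b : ℂ) * (N i_1 l : ℂ) * (2 * (Θ p b : ℂ) * Complex.I)
      = -∑ i : Fin m, ∑ i_1 : Fin m, (J i i_1 : ℂ)
        * ∑ b, (N i l : ℂ) * (N i_1 b : ℂ) * (2 * (Θ p b : ℂ) * Complex.I) := by
    calc ∑ i : Fin m, ∑ i_1 : Fin m, (J i i_1 : ℂ)
        * ∑ b, (N i b : ℂ) * (N i_1 l : ℂ) * (2 * (Θ p b : ℂ) * Complex.I)
        = ∑ u : Fin m, ∑ v : Fin m, (J v u : ℂ)
            * ∑ b, (N v b : ℂ) * (N u l : ℂ) * (2 * (Θ p b : ℂ) * Complex.I) :=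
          Finset.sum_comm
      _ = ∑ u : Fin m, ∑ v : Fin m, -((J u v : ℂ)
            * ∑ b, (N u l : ℂ) * (N v b : ℂ) * (2 * (Θ p b : ℂ) * Complex.I)) := by
          refine Finset.sum_congr rfl fun u _ => Finset.sum_congr rfl fun v _ => ?_
          rw [hJ' v u, show ∑ b, (N v b : ℂ) * (N u l : ℂ) * (2 * (Θ p b : ℂ) * Complex.I)
              = ∑ b, (N u l : ℂ) * (N v b : ℂ) * (2 * (Θ p b : ℂ) * Complex.I) from
            Finset.sum_congr rfl fun b _ => by ring]
          ring
      _ = _ := by simp only [Finset.sum_neg_distrib]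
  have e2 : ∑ i : Fin m, ∑ i_1 : Fin m, (J i i_1 : ℂ) *
        (-∑ b, (N i l : ℂ) * (N i_1 b : ℂ) * (2 * (Θ p b : ℂ) * Complex.I) -
          ∑ b, (N i b : ℂ) * (N i_1 l : ℂ) * (2 * (Θ p b : ℂ) * Complex.I))
      = -∑ i : Fin m, ∑ i_1 : Fin m, (J i i_1 : ℂ)
          * ∑ b, (N i l : ℂ) * (N i_1 b : ℂ) * (2 * (Θ p b : ℂ) * Complex.I)
        - ∑ i : Fin m, ∑ i_1 : Fin m, (J i i_1 : ℂ)
          * ∑ b, (N i b : ℂ) * (N i_1 l : ℂ) * (2 * (Θ p b : ℂ) * Complex.I) := by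
    simp only [mul_sub, mul_neg, Finset.sum_sub_distrib, Finset.sum_neg_distrib]
  have e3 : Complex.I * ∑ b, (R l b : ℂ) * (2 * (Θ b p : ℂ) * Complex.I)
      = 2 * ∑ b, (Θ p b : ℂ) * (R b l : ℂ) := by
    rw [Finset.mul_sum, Finset.mul_sum]
    refine Finset.sum_congr rfl fun b _ => ?_
    rw [hΘ' b p, hR' l b]
    linear_combination (-2 * (R b l : ℂ) * (Θ p b : ℂ)) * Complex.I_mul_I
  have swap3 : ∀ F : Fin n → Fin m → Fin m → ℂ,
      ∑ b, ∑ u, ∑ v, F b u v = ∑ u, ∑ v, ∑ b, F b u v := by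
    intro F
    rw [Finset.sum_comm]
    exact Finset.sum_congr rfl fun u _ => Finset.sum_comm
  have e4 : Complex.I * ∑ i : Fin m, ∑ i_1 : Fin m, (J i i_1 : ℂ)
        * ∑ b, (N i l : ℂ) * (N i_1 b : ℂ) * (2 * (Θ p b : ℂ) * Complex.I)
      = 2 * ∑ b, ∑ u, ∑ v, (Θ p b : ℂ) * (N u b : ℂ) * (J u v : ℂ) * (N v l : ℂ) := by
    rw [Finset.mul_sum]
    simp only [Finset.mul_sum]
    rw [Finset.sum_comm, swap3]
    refine Finset.sum_congr rfl fun u _ => Finset.sum_congr rfl fun v _ =>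
      Finset.sum_congr rfl fun b _ => ?_
    rw [hJ' v u]
    linear_combination (-2 * (Θ p b : ℂ) * (N u b : ℂ) * (J u v : ℂ) * (N v l : ℂ))
      * Complex.I_mul_I
  have hRent : ((((2:ℝ) • (Θ * (R + Nᵀ * J * N))) p l : ℝ) : ℂ)
      = 2 * ∑ b, (Θ p b : ℂ) * (R b l : ℂ)
        + 2 * ∑ b, ∑ u, ∑ v, (Θ p b : ℂ) * (N u b : ℂ) * (J u v : ℂ) * (N v l : ℂ) := by
    simp only [Matrix.smul_apply, Matrix.mul_apply, Matrix.add_apply, Matrix.transpose_apply,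
      smul_eq_mul]
    push_cast
    rw [← mul_add, ← Finset.sum_add_distrib]
    congr 1
    refine Finset.sum_congr rfl fun b _ => ?_
    rw [mul_add]
    congr 1
    calc (Θ p b : ℂ) * ∑ x_1, (∑ x_2, (N x_2 b : ℂ) * (J x_2 x_1 : ℂ)) * (N x_1 l : ℂ)
        = ∑ x_1, ∑ x_2, (Θ p b : ℂ) * ((N x_2 b : ℂ) * (J x_2 x_1 : ℂ) * (N x_1 l : ℂ)) := by
          rw [Finset.mul_sum]
          refine Finset.sum_congr rfl fun x1 _ => ?_
          rw [Finset.sum_mul, Finset.mul_sum]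
      _ = ∑ u, ∑ v, (Θ p b : ℂ) * (N u b : ℂ) * (J u v : ℂ) * (N v l : ℂ) := by
          rw [Finset.sum_comm]
          exact Finset.sum_congr rfl fun u _ => Finset.sum_congr rfl fun v _ => by ring
  linear_combination e3 - hRent - (1/2 : ℂ) * e0 - (Complex.I/2) * e2 - (Complex.I/2) * e1 + e4

lemma scal3 {n m : ℕ} (Θ : Matrix (Fin n) (Fin n) ℝ) (hΘ : Θᵀ = -Θ)
    (R : Matrix (Fin n) (Fin n) ℝ) (hR : Rᵀ = R)
    (N : Matrix (Fin m) (Fin n) ℝ)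
    (J : Matrix (Fin m) (Fin m) ℝ) (hJ : Jᵀ = -J) (j k : Fin n) :
    0 - ∑ i, ∑ i_1, ((1 : Matrix (Fin m) (Fin m) ℂ) + Complex.I • J.map (algebraMap ℝ ℂ)) i i_1
        * ∑ b, ∑ a, (N i b : ℂ) * (N i_1 a : ℂ)
            * (2 * (Θ j b : ℂ) * Complex.I * (2 * (Θ k a : ℂ) * Complex.I)) -
      1 / 2 * ∑ i, ∑ i_1,
        ((1 : Matrix (Fin m) (Fin m) ℂ) + Complex.I • J.map (algebraMap ℝ ℂ)) i i_1 *
          (-∑ b, ∑ a, (N i a : ℂ) * (N i_1 b : ℂ)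
              * (2 * (Θ k b : ℂ) * Complex.I * (2 * (Θ a j : ℂ) * Complex.I)) -
            ∑ b, ∑ a, (N i b : ℂ) * (N i_1 a : ℂ)
              * (2 * (Θ j b : ℂ) * Complex.I * (2 * (Θ k a : ℂ) * Complex.I))) =
    -∑ l, ((((2:ℝ) • (Θ * (R + Nᵀ * J * N))) j l : ℝ) : ℂ) * (Complex.I * (Θ l k : ℂ)) -
      ∑ l, ((((2:ℝ) • (Θ * (R + Nᵀ * J * N))) k l : ℝ) : ℂ) * (Complex.I * (Θ j l : ℂ)) +
      (((((2:ℝ) • (Θ * Nᵀ)) * (((2:ℝ) • (Θ * Nᵀ)))ᵀ) j k : ℝ) : ℂ) := by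
  have hΘ' : ∀ a b, (Θ a b : ℂ) = -(Θ b a : ℂ) := fun a b => by
    have := congrFun (congrFun hΘ b) a
    rw [Matrix.transpose_apply, Matrix.neg_apply] at this
    exact_mod_cast this
  have hJ' : ∀ a b, (J a b : ℂ) = -(J b a : ℂ) := fun a b => by
    have := congrFun (congrFun hJ b) a
    rw [Matrix.transpose_apply, Matrix.neg_apply] at this
    exact_mod_cast this
  have hR' : ∀ a b, (R a b : ℂ) = (R b a : ℂ) := fun a b => by
    have := congrFun (congrFun hR b) a
    rw [Matrix.transpose_apply] at this
    exact_mod_cast this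
  have hOm : ∀ f : Fin m → Fin m → ℂ,
      ∑ i, ∑ i_1, ((1 : Matrix (Fin m) (Fin m) ℂ) + Complex.I • J.map (algebraMap ℝ ℂ)) i i_1 * f i i_1
        = (∑ i, f i i) + Complex.I * ∑ i, ∑ i_1, (J i i_1 : ℂ) * f i i_1 := by
    intro f
    simp only [Matrix.add_apply, Matrix.one_apply, Matrix.smul_apply, Matrix.map_apply,
      smul_eq_mul, add_mul, ite_mul, one_mul, zero_mul, Finset.sum_add_distrib]
    congr 1
    · exact Finset.sum_congr rfl fun i _ => by rw [Finset.sum_ite_eq]; simp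
    · rw [Finset.mul_sum]
      refine Finset.sum_congr rfl fun i _ => ?_
      rw [Finset.mul_sum]
      refine Finset.sum_congr rfl fun i_1 _ => ?_
      rw [Complex.coe_algebraMap]
      ring
  have hg : ∀ i i_1 : Fin m, ∑ b, ∑ a, (N i a : ℂ) * (N i_1 b : ℂ)
        * (2 * (Θ k b : ℂ) * Complex.I * (2 * (Θ a j : ℂ) * Complex.I))
      = -∑ b, ∑ a, (N i b : ℂ) * (N i_1 a : ℂ)
        * (2 * (Θ j b : ℂ) * Complex.I * (2 * (Θ k a : ℂ) * Complex.I)) := by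
    intro i i_1
    calc ∑ b, ∑ a, (N i a : ℂ) * (N i_1 b : ℂ)
          * (2 * (Θ k b : ℂ) * Complex.I * (2 * (Θ a j : ℂ) * Complex.I))
        = ∑ b, ∑ a, (N i b : ℂ) * (N i_1 a : ℂ)
          * (2 * (Θ k a : ℂ) * Complex.I * (2 * (Θ b j : ℂ) * Complex.I)) := Finset.sum_comm
      _ = ∑ b, ∑ a, -((N i b : ℂ) * (N i_1 a : ℂ)
          * (2 * (Θ j b : ℂ) * Complex.I * (2 * (Θ k a : ℂ) * Complex.I))) := by
          refine Finset.sum_congr rfl fun b _ => Finset.sum_congr rfl fun a _ => ?_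
          rw [hΘ' b j]; ring
      _ = _ := by simp only [Finset.sum_neg_distrib]
  rw [hOm, hOm]
  simp only [hg, neg_neg, sub_self, mul_zero, Finset.sum_const_zero]
  have hAent : ∀ p q : Fin n, ((((2:ℝ) • (Θ * (R + Nᵀ * J * N))) p q : ℝ) : ℂ)
      = 2 * ∑ b, (Θ p b : ℂ) * (R b q : ℂ)
        + 2 * ∑ b, ∑ u, ∑ v, (Θ p b : ℂ) * (N u b : ℂ) * (J u v : ℂ) * (N v q : ℂ) := by
    intro p q
    simp only [Matrix.smul_apply, Matrix.mul_apply, Matrix.add_apply, Matrix.transpose_apply,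
      smul_eq_mul]
    push_cast
    rw [← mul_add, ← Finset.sum_add_distrib]
    congr 1
    refine Finset.sum_congr rfl fun b _ => ?_
    rw [mul_add]
    congr 1
    calc (Θ p b : ℂ) * ∑ x_1, (∑ x_2, (N x_2 b : ℂ) * (J x_2 x_1 : ℂ)) * (N x_1 q : ℂ)
        = ∑ x_1, ∑ x_2, (Θ p b : ℂ) * ((N x_2 b : ℂ) * (J x_2 x_1 : ℂ) * (N x_1 q : ℂ)) := by
          rw [Finset.mul_sum]
          refine Finset.sum_congr rfl fun x1 _ => ?_
          rw [Finset.sum_mul, Finset.mul_sum]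
      _ = ∑ u, ∑ v, (Θ p b : ℂ) * (N u b : ℂ) * (J u v : ℂ) * (N v q : ℂ) := by
          rw [Finset.sum_comm]
          exact Finset.sum_congr rfl fun u _ => Finset.sum_congr rfl fun v _ => by ring
  have e5 : ∑ i : Fin m, ∑ b, ∑ a, (N i b : ℂ) * (N i a : ℂ)
        * (2 * (Θ j b : ℂ) * Complex.I * (2 * (Θ k a : ℂ) * Complex.I))
      = -(((((2:ℝ) • (Θ * Nᵀ)) * (((2:ℝ) • (Θ * Nᵀ)))ᵀ) j k : ℝ) : ℂ) := by
    simp only [Matrix.mul_apply, Matrix.transpose_apply, Matrix.smul_apply, smul_eq_mul]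
    push_cast
    rw [show -(∑ i : Fin m, ((2:ℂ) * ∑ b, (Θ j b : ℂ) * (N i b : ℂ))
          * ((2:ℂ) * ∑ a, (Θ k a : ℂ) * (N i a : ℂ)))
        = ∑ i : Fin m, -(((2:ℂ) * ∑ b, (Θ j b : ℂ) * (N i b : ℂ))
          * ((2:ℂ) * ∑ a, (Θ k a : ℂ) * (N i a : ℂ))) by rw [Finset.sum_neg_distrib]]
    refine Finset.sum_congr rfl fun i _ => ?_
    rw [mul_mul_mul_comm, Finset.sum_mul_sum]
    simp only [Finset.mul_sum, ← Finset.sum_neg_distrib]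
    refine Finset.sum_congr rfl fun b _ => ?_
    refine Finset.sum_congr rfl fun a _ => ?_
    linear_combination (4 * (N i b : ℂ) * (N i a : ℂ) * (Θ j b : ℂ) * (Θ k a : ℂ))
      * Complex.I_mul_I
  have hL1 : ∑ l, ((((2:ℝ) • (Θ * (R + Nᵀ * J * N))) j l : ℝ) : ℂ) * (Complex.I * (Θ l k : ℂ))
      = 2 * Complex.I * (∑ l, ∑ b, (Θ j b : ℂ) * (R b l : ℂ) * (Θ l k : ℂ))
        + 2 * Complex.I * (∑ l, ∑ b, ∑ u, ∑ v,
            (Θ j b : ℂ) * (N u b : ℂ) * (J u v : ℂ) * (N v l : ℂ) * (Θ l k : ℂ)) := by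
    calc ∑ l, ((((2:ℝ) • (Θ * (R + Nᵀ * J * N))) j l : ℝ) : ℂ) * (Complex.I * (Θ l k : ℂ))
        = ∑ l, (2 * Complex.I * (∑ b, (Θ j b : ℂ) * (R b l : ℂ) * (Θ l k : ℂ))
            + 2 * Complex.I * (∑ b, ∑ u, ∑ v,
              (Θ j b : ℂ) * (N u b : ℂ) * (J u v : ℂ) * (N v l : ℂ) * (Θ l k : ℂ))) := by
          refine Finset.sum_congr rfl fun l _ => ?_
          rw [hAent j l]
          simp only [← Finset.sum_mul]
          ring
      _ = _ := by rw [Finset.sum_add_distrib, ← Finset.mul_sum, ← Finset.mul_sum]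
  have hL2 : ∑ l, ((((2:ℝ) • (Θ * (R + Nᵀ * J * N))) k l : ℝ) : ℂ) * (Complex.I * (Θ j l : ℂ))
      = 2 * Complex.I * (∑ l, ∑ b, (Θ k b : ℂ) * (R b l : ℂ) * (Θ j l : ℂ))
        + 2 * Complex.I * (∑ l, ∑ b, ∑ u, ∑ v,
            (Θ k b : ℂ) * (N u b : ℂ) * (J u v : ℂ) * (N v l : ℂ) * (Θ j l : ℂ)) := by
    calc ∑ l, ((((2:ℝ) • (Θ * (R + Nᵀ * J * N))) k l : ℝ) : ℂ) * (Complex.I * (Θ j l : ℂ))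
        = ∑ l, (2 * Complex.I * (∑ b, (Θ k b : ℂ) * (R b l : ℂ) * (Θ j l : ℂ))
            + 2 * Complex.I * (∑ b, ∑ u, ∑ v,
              (Θ k b : ℂ) * (N u b : ℂ) * (J u v : ℂ) * (N v l : ℂ) * (Θ j l : ℂ))) := by
          refine Finset.sum_congr rfl fun l _ => ?_
          rw [hAent k l]
          simp only [← Finset.sum_mul]
          ring
      _ = _ := by rw [Finset.sum_add_distrib, ← Finset.mul_sum, ← Finset.mul_sum]
  have hP : (∑ l, ∑ b, (Θ k b : ℂ) * (R b l : ℂ) * (Θ j l : ℂ))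
      = -(∑ l, ∑ b, (Θ j b : ℂ) * (R b l : ℂ) * (Θ l k : ℂ)) := by
    calc ∑ l, ∑ b, (Θ k b : ℂ) * (R b l : ℂ) * (Θ j l : ℂ)
        = ∑ l, ∑ b, (Θ k l : ℂ) * (R l b : ℂ) * (Θ j b : ℂ) := Finset.sum_comm
      _ = ∑ l, ∑ b, -((Θ j b : ℂ) * (R b l : ℂ) * (Θ l k : ℂ)) := by
          refine Finset.sum_congr rfl fun l _ => Finset.sum_congr rfl fun b _ => ?_
          rw [hΘ' k l, hR' l b]; ring
      _ = _ := by simp only [Finset.sum_neg_distrib]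
  have hQ : (∑ l, ∑ b, ∑ u, ∑ v,
        (Θ k b : ℂ) * (N u b : ℂ) * (J u v : ℂ) * (N v l : ℂ) * (Θ j l : ℂ))
      = ∑ l, ∑ b, ∑ u, ∑ v,
        (Θ j b : ℂ) * (N u b : ℂ) * (J u v : ℂ) * (N v l : ℂ) * (Θ l k : ℂ) := by
    calc ∑ l, ∑ b, ∑ u, ∑ v,
          (Θ k b : ℂ) * (N u b : ℂ) * (J u v : ℂ) * (N v l : ℂ) * (Θ j l : ℂ)
        = ∑ l, ∑ b, ∑ u, ∑ v,
          (Θ k l : ℂ) * (N u l : ℂ) * (J u v : ℂ) * (N v b : ℂ) * (Θ j b : ℂ) :=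
          Finset.sum_comm
      _ = ∑ l, ∑ b, ∑ u, ∑ v,
          (Θ k l : ℂ) * (N v l : ℂ) * (J v u : ℂ) * (N u b : ℂ) * (Θ j b : ℂ) := by
          exact Finset.sum_congr rfl fun l _ => Finset.sum_congr rfl fun b _ => Finset.sum_comm
      _ = _ := by
          refine Finset.sum_congr rfl fun l _ => Finset.sum_congr rfl fun b _ =>
            Finset.sum_congr rfl fun u _ => Finset.sum_congr rfl fun v _ => ?_
          rw [hΘ' k l, hJ' v u]; ring
  have swap4 : ∀ F : Fin n → Fin n → Fin m → Fin m → ℂ,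
      ∑ l, ∑ b, ∑ u, ∑ v, F l b u v = ∑ u, ∑ v, ∑ b, ∑ l, F l b u v := by
    intro F
    calc ∑ l, ∑ b, ∑ u, ∑ v, F l b u v
        = ∑ b, ∑ l, ∑ u, ∑ v, F l b u v := Finset.sum_comm
      _ = ∑ b, ∑ u, ∑ l, ∑ v, F l b u v :=
          Finset.sum_congr rfl fun b _ => Finset.sum_comm
      _ = ∑ b, ∑ u, ∑ v, ∑ l, F l b u v :=
          Finset.sum_congr rfl fun b _ => Finset.sum_congr rfl fun u _ => Finset.sum_comm
      _ = ∑ u, ∑ b, ∑ v, ∑ l, F l b u v := Finset.sum_comm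
      _ = ∑ u, ∑ v, ∑ b, ∑ l, F l b u v :=
          Finset.sum_congr rfl fun u _ => Finset.sum_comm
  have hSJ : Complex.I * (∑ i : Fin m, ∑ i_1 : Fin m, (J i i_1 : ℂ)
        * ∑ b, ∑ a, (N i b : ℂ) * (N i_1 a : ℂ)
          * (2 * (Θ j b : ℂ) * Complex.I * (2 * (Θ k a : ℂ) * Complex.I)))
      = 4 * Complex.I * (∑ l, ∑ b, ∑ u, ∑ v,
          (Θ j b : ℂ) * (N u b : ℂ) * (J u v : ℂ) * (N v l : ℂ) * (Θ l k : ℂ)) := by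
    rw [show (∑ l, ∑ b, ∑ u, ∑ v,
          (Θ j b : ℂ) * (N u b : ℂ) * (J u v : ℂ) * (N v l : ℂ) * (Θ l k : ℂ))
        = ∑ u, ∑ v, ∑ b, ∑ l,
          (Θ j b : ℂ) * (N u b : ℂ) * (J u v : ℂ) * (N v l : ℂ) * (Θ l k : ℂ) from swap4 _]
    simp only [Finset.mul_sum]
    refine Finset.sum_congr rfl fun u _ => ?_
    refine Finset.sum_congr rfl fun v _ => ?_
    refine Finset.sum_congr rfl fun b _ => ?_
    refine Finset.sum_congr rfl fun a _ => ?_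
    rw [hΘ' a k]
    linear_combination (4 * Complex.I * (J u v : ℂ) * (N u b : ℂ) * (N v a : ℂ)
      * (Θ j b : ℂ) * (Θ k a : ℂ)) * Complex.I_mul_I
  linear_combination -e5 - hSJ + 2 * Complex.I * hP + 2 * Complex.I * hQ + hL1 + hL2

end CCRAux

open CCRAux

/-- For the open quantum harmonic oscillator with `H = (1/2)XᵀRX`, `L = NX`,
`Ω = I + iJ`, `A = 2Θ(R + NᵀJN)`, `B = 2ΘNᵀ` and `Ξⱼₖ = XⱼXₖ − iΘⱼₖ·1`, the GKSL
generator satisfies the Lyapunov-type identity `𝒢(Ξ) = AΞ + ΞAᵀ + BBᵀ·1` entrywise. -/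
theorem ccr_gksl_second_moments
    {A : Type*} [Ring A] [Algebra ℂ A] {n m : ℕ}
    (Θ : Matrix (Fin n) (Fin n) ℝ) (hΘ : Θᵀ = -Θ)
    (X : Fin n → A) (hX : SatisfiesCCR X Θ)
    (R : Matrix (Fin n) (Fin n) ℝ) (hR : Rᵀ = R)
    (N : Matrix (Fin m) (Fin n) ℝ)
    (J : Matrix (Fin m) (Fin m) ℝ) (hJ : Jᵀ = -J) :
    ∀ j k, gksl ((1 / 2 : ℂ) • quad X R) (fun k' => ∑ j', ((N k' j' : ℂ)) • X j')
          ((1 : Matrix (Fin m) (Fin m) ℂ) + Complex.I • (J.map (algebraMap ℝ ℂ)))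
          (X j * X k - (Complex.I * (Θ j k : ℂ)) • (1 : A)) =
        (∑ l, ((((2 : ℝ) • (Θ * (R + Nᵀ * J * N))) j l : ℂ)) •
            (X l * X k - (Complex.I * (Θ l k : ℂ)) • (1 : A))) +
          (∑ l, ((((2 : ℝ) • (Θ * (R + Nᵀ * J * N))) k l : ℂ)) •
            (X j * X l - (Complex.I * (Θ j l : ℂ)) • (1 : A))) +
          (((((2 : ℝ) • (Θ * Nᵀ)) * ((2 : ℝ) • (Θ * Nᵀ))ᵀ) j k : ℂ)) • (1 : A) := by
  intro j k
  set Ω : Matrix (Fin m) (Fin m) ℂ :=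
    (1 : Matrix (Fin m) (Fin m) ℂ) + Complex.I • (J.map (algebraMap ℝ ℂ)) with hΩ
  simp only [gksl]
  have hdrop1 : ∀ (w z : A) (s : ℂ),
      z * (w - s • (1 : A)) - (w - s • (1 : A)) * z = z * w - w * z := by
    intro w z s
    simp only [mul_sub, sub_mul, mul_smul_comm, smul_mul_assoc, mul_one, one_mul]
    abel
  have hdrop2 : ∀ (w z : A) (s : ℂ),
      (w - s • (1 : A)) * z - z * (w - s • (1 : A)) = w * z - z * w := by
    intro w z s
    simp only [mul_sub, sub_mul, mul_smul_comm, smul_mul_assoc, mul_one, one_mul]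
    abel
  simp only [hdrop1, hdrop2]
  have hT : (∑ l, ∑ m', Ω l m' • ((∑ b, ((N l b : ℂ)) • X b) * (∑ b, ((N m' b : ℂ)) • X b)))
        * (X j * X k)
        - (X j * X k) * (∑ l, ∑ m', Ω l m'
            • ((∑ b, ((N l b : ℂ)) • X b) * (∑ b, ((N m' b : ℂ)) • X b)))
      = ∑ l, ∑ m', Ω l m' • (((∑ b, ((N l b : ℂ)) • X b) * (∑ b, ((N m' b : ℂ)) • X b)) * (X j * X k)
          - (X j * X k) * ((∑ b, ((N l b : ℂ)) • X b) * (∑ b, ((N m' b : ℂ)) • X b))) := by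
    rw [Finset.sum_mul, Finset.mul_sum, ← Finset.sum_sub_distrib]
    refine Finset.sum_congr rfl fun l _ => ?_
    rw [Finset.sum_mul, Finset.mul_sum, ← Finset.sum_sub_distrib]
    refine Finset.sum_congr rfl fun m' _ => ?_
    rw [smul_mul_assoc, mul_smul_comm, ← smul_sub]
  rw [hT]
  have hprod : ∀ (a b : A), (a * b) * (X j * X k) - (X j * X k) * (a * b)
      = -(a * ((X j * X k) * b - b * (X j * X k)))
        - ((X j * X k) * a - a * (X j * X k)) * b := by
    intro a b; noncomm_ring
  simp only [hprod]
  simp only [L_mul_G hX j k, G_mul_L hX j k, piece_ham hX hR j k]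
  simp only [CF_neg, CF_sub, CF_smul, CF_sum]
  have hRHS : (∑ l, ((((2 : ℝ) • (Θ * (R + Nᵀ * J * N))) j l : ℂ)) •
            (X l * X k - (Complex.I * (Θ l k : ℂ)) • (1 : A))) +
          (∑ l, ((((2 : ℝ) • (Θ * (R + Nᵀ * J * N))) k l : ℂ)) •
            (X j * X l - (Complex.I * (Θ j l : ℂ)) • (1 : A))) +
          (((((2 : ℝ) • (Θ * Nᵀ)) * ((2 : ℝ) • (Θ * Nᵀ))ᵀ) j k : ℂ)) • (1 : A)
      = CF X j k (fun l => ((((2 : ℝ) • (Θ * (R + Nᵀ * J * N))) j l : ℂ)))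
          (fun l => ((((2 : ℝ) • (Θ * (R + Nᵀ * J * N))) k l : ℂ)))
          (-(∑ l, (((2 : ℝ) • (Θ * (R + Nᵀ * J * N))) j l : ℂ) * (Complex.I * (Θ l k : ℂ)))
            - (∑ l, (((2 : ℝ) • (Θ * (R + Nᵀ * J * N))) k l : ℂ) * (Complex.I * (Θ j l : ℂ)))
            + ((((2 : ℝ) • (Θ * Nᵀ)) * ((2 : ℝ) • (Θ * Nᵀ))ᵀ) j k : ℂ)) := by
    simp only [CF, smul_sub, smul_smul, Finset.sum_sub_distrib, ← Finset.sum_smul,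
      neg_smul, sub_smul, add_smul]
    abel
  rw [hRHS]
  refine CF_congr X j k ?_ ?_ ?_
  · intro l
    rw [hΩ]
    exact scal1 Θ hΘ R hR N J hJ j l
  · intro l
    rw [hΩ]
    exact scal1 Θ hΘ R hR N J hJ k l
  · rw [hΩ]
    exact scal3 Θ hΘ R hR N J hJ j k
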